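/- Let ρ be an SL(3,ℂ)-structure on a 6-manifold, p a point, v ∈ T_pM nonzero, J = J_ρ. Set ω₁ = ρ_p(v,·,·) and ω₂ = ρ_p(J_p v,·,·). Then ker ω₁ = ker ω₂ = span{v, J_p v}, and ω_i ∧ ω_j = δ_{ij} ω₁² for i,j ∈ {1,2}. -/

import Mathlib

open Module

/-- Wedge product of `k` covectors, as an alternating `k`-form (determinant convention). -/
noncomputable def wedgeCov {V : Type*} [AddCommGroup V] [Module ℝ V] {k : ℕ}
    (f : Fin k → Module.Dual ℝ V) : V [⋀^Fin k]→ₗ[ℝ] ℝ :=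
  Matrix.detRowAlternating.compLinearMap (LinearMap.pi f)

/-- Wedge product of alternating forms (shuffle convention, compatible with `wedgeCov`). -/
noncomputable def aw {V : Type*} [AddCommGroup V] [Module ℝ V] {a b : ℕ}
    (ω : V [⋀^Fin a]→ₗ[ℝ] ℝ) (σ : V [⋀^Fin b]→ₗ[ℝ] ℝ) : V [⋀^Fin (a + b)]→ₗ[ℝ] ℝ :=
  ((TensorProduct.lid ℝ ℝ).toLinearMap.compAlternatingMap (ω.domCoprod σ)).domDomCongr
    finSumFinEquiv

/-- The `i`-th coordinate covector on `Fin n → ℝ`. -/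
noncomputable def pr {n : ℕ} (i : Fin n) : Module.Dual ℝ (Fin n → ℝ) := LinearMap.proj i

/-- The model `SL(3,ℂ)` three-form `ρ₀ = e¹³⁵ − e¹⁴⁶ − e²³⁶ − e²⁴⁵` on `ℝ⁶` (0-based indices). -/
noncomputable def rho0 : (Fin 6 → ℝ) [⋀^Fin 3]→ₗ[ℝ] ℝ :=
  wedgeCov ![pr 0, pr 2, pr 4] - wedgeCov ![pr 0, pr 3, pr 5] - wedgeCov ![pr 1, pr 2, pr 5] -
    wedgeCov ![pr 1, pr 3, pr 4]

/-- A three-form on a real vector space is an `SL(3,ℂ)`-structure if it is linearly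
equivalent to the model form `ρ₀`. -/
def IsSL3 {V : Type*} [AddCommGroup V] [Module ℝ V] (ρ : V [⋀^Fin 3]→ₗ[ℝ] ℝ) : Prop :=
  ∃ u : V ≃ₗ[ℝ] (Fin 6 → ℝ), ρ = rho0.compLinearMap u.toLinearMap

/-- The model almost complex structure adapted to `ρ₀`:
`J₀ f₁ = −f₂, J₀ f₂ = f₁, J₀ f₃ = −f₄, J₀ f₄ = f₃, J₀ f₅ = −f₆, J₀ f₆ = f₅`. -/
noncomputable def Jmodel : (Fin 6 → ℝ) →ₗ[ℝ] (Fin 6 → ℝ) :=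
  Matrix.toLin' !![0,1,0,0,0,0; -1,0,0,0,0,0; 0,0,0,1,0,0; 0,0,-1,0,0,0;
    0,0,0,0,0,1; 0,0,0,0,-1,0]

/-- `J` is the almost complex structure induced by the `SL(3,ℂ)`-structure `ρ`:
in an(y) adapted basis for `ρ`, `J` is given by the model complex structure. -/
def IsInducedJ {V : Type*} [AddCommGroup V] [Module ℝ V] (ρ : V [⋀^Fin 3]→ₗ[ℝ] ℝ)
    (J : V →ₗ[ℝ] V) : Prop :=
  ∃ u : V ≃ₗ[ℝ] (Fin 6 → ℝ), ρ = rho0.compLinearMap u.toLinearMap ∧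
    ∀ x : V, J x = u.symm (Jmodel (u x))

/-- The wedge product of two 2-forms (given as functions of two vectors), evaluated
on four vectors. -/
noncomputable def sh2 {V : Type*} (f g : V → V → ℝ) (a b c d : V) : ℝ :=
  f a b * g c d - f a c * g b d + f a d * g b c + f b c * g a d - f b d * g a c +
    f c d * g a b

/-! Everything transports along an adapted frame `u`, so it suffices to treat the model
`(ℝ⁶, ρ₀, J₀)`. There `ρ₀ = Re (dz₁ ∧ dz₂ ∧ dz₃)` and `rho0Cross w` is the real form of the
complex cross product with `w`; applying it twice gives the BAC–CAB identity
`w × (w × x) = ⟨x, w⟩ w + ⟨x, J₀ w⟩ J₀ w - |w|² x`, which identifies its kernel with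
`span {w, J₀ w}`. The wedge identities are the real and imaginary parts of `α ∧ α = 0` for the
`(2,0)`-form `α = ι_w (dz₁ ∧ dz₂ ∧ dz₃)`, whose real part is `ω₁` and imaginary part `± ω₂`:
on `ℂ³` there are no nonzero `(4,0)`-forms. In coordinates both are polynomial identities. -/

open Submodule

section Contraction

variable {R M N : Type*} [CommSemiring R] [AddCommMonoid M] [Module R M] [AddCommMonoid N]
  [Module R N]

def contractionKer (ρ : M [⋀^Fin 3]→ₗ[R] N) (z : M) : Submodule R M :=
  LinearMap.ker (ρ.curryLeft z).curryLeft

theorem mem_contractionKer {ρ : M [⋀^Fin 3]→ₗ[R] N} {z x : M} :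
    x ∈ contractionKer ρ z ↔ ∀ y, ρ ![z, x, y] = 0 := by
  refine ⟨fun h y => congrArg (fun f => f ![y]) h, fun h => ?_⟩
  refine LinearMap.mem_ker.2 (AlternatingMap.ext fun y => ?_)
  obtain ⟨y, rfl⟩ : ∃ y₀, y = ![y₀] := ⟨y 0, by ext i; fin_cases i; rfl⟩
  exact h y

theorem coe_contractionKer (ρ : M [⋀^Fin 3]→ₗ[R] N) (z : M) :
    (contractionKer ρ z : Set M) = {x | ∀ y, ρ ![z, x, y] = 0} :=
  Set.ext fun _ => mem_contractionKer

theorem AlternatingMap.compLinearMap_apply_vec3 {P : Type*} [AddCommMonoid P] [Module R P]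
    (f : M [⋀^Fin 3]→ₗ[R] N) (u : P →ₗ[R] M) (p q r : P) :
    f.compLinearMap u ![p, q, r] = f ![u p, u q, u r] := by
  rw [AlternatingMap.compLinearMap_apply]
  congr 1
  ext i
  fin_cases i <;> rfl

theorem contractionKer_compLinearMap {P : Type*} [AddCommMonoid P] [Module R P]
    (f : M [⋀^Fin 3]→ₗ[R] N) (u : P ≃ₗ[R] M) (z : P) :
    contractionKer (f.compLinearMap (u : P →ₗ[R] M)) z =
      (contractionKer f (u z)).comap (u : P →ₗ[R] M) := by
  ext x
  simp only [mem_comap, mem_contractionKer, AlternatingMap.compLinearMap_apply_vec3,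
    LinearEquiv.coe_coe]
  exact (u.surjective.forall (p := fun y => f ![u z, u x, y] = 0)).symm

end Contraction

theorem Submodule.comap_equiv_span_pair {R M N : Type*} [Semiring R] [AddCommMonoid M]
    [Module R M] [AddCommMonoid N] [Module R N] (u : M ≃ₗ[R] N) (a b : N) :
    (span R {a, b}).comap (u : M →ₗ[R] N) = span R {u.symm a, u.symm b} := by
  rw [comap_equiv_eq_map_symm, map_span, Set.image_pair]
  rfl

theorem Submodule.span_pair_neg_swap {R M : Type*} [Ring R] [AddCommGroup M] [Module R M]
    (a b : M) : span R {b, -a} = span R {a, b} := by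
  rw [Set.pair_comm, span_insert, span_insert, ← Set.neg_singleton, span_neg]

theorem wedgeCov_apply {V : Type*} [AddCommGroup V] [Module ℝ V] {k : ℕ}
    (f : Fin k → Module.Dual ℝ V) (v : Fin k → V) :
    wedgeCov f v = (Matrix.of fun j i => f i (v j)).det := rfl

theorem rho0_apply (x y z : Fin 6 → ℝ) :
    rho0 ![x, y, z] =
      (x 0 * (y 2 * z 4 - y 4 * z 2) - x 2 * (y 0 * z 4 - y 4 * z 0)
        + x 4 * (y 0 * z 2 - y 2 * z 0))
      - (x 0 * (y 3 * z 5 - y 5 * z 3) - x 3 * (y 0 * z 5 - y 5 * z 0)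
        + x 5 * (y 0 * z 3 - y 3 * z 0))
      - (x 1 * (y 2 * z 5 - y 5 * z 2) - x 2 * (y 1 * z 5 - y 5 * z 1)
        + x 5 * (y 1 * z 2 - y 2 * z 1))
      - (x 1 * (y 3 * z 4 - y 4 * z 3) - x 3 * (y 1 * z 4 - y 4 * z 1)
        + x 4 * (y 1 * z 3 - y 3 * z 1)) := by
  simp only [rho0, pr, AlternatingMap.sub_apply, wedgeCov_apply, Matrix.det_fin_three,
    Matrix.of_apply, LinearMap.coe_proj, Function.eval, Matrix.cons_val]
  ring

theorem Jmodel_apply (w : Fin 6 → ℝ) : Jmodel w = ![w 1, -w 0, w 3, -w 2, w 5, -w 4] := by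
  ext i
  fin_cases i <;> simp [Jmodel, Matrix.mulVec, dotProduct, Fin.sum_univ_six]

theorem Jmodel_Jmodel (w : Fin 6 → ℝ) : Jmodel (Jmodel w) = -w := by
  ext i
  fin_cases i <;> simp [Jmodel_apply]

theorem rho0_apply_Jmodel_self (w y : Fin 6 → ℝ) : rho0 ![w, Jmodel w, y] = 0 := by
  simp only [rho0_apply, Jmodel_apply, Matrix.cons_val]
  ring

noncomputable def rho0Cross (w x : Fin 6 → ℝ) : Fin 6 → ℝ := fun k => rho0 ![w, x, Pi.single k 1]

theorem rho0Cross_rho0Cross (w x : Fin 6 → ℝ) :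
    rho0Cross w (rho0Cross w x) =
      (x ⬝ᵥ w) • w + (x ⬝ᵥ Jmodel w) • Jmodel w - (w ⬝ᵥ w) • x := by
  ext k
  fin_cases k <;>
    simp only [rho0Cross, rho0_apply, Jmodel_apply, dotProduct, Fin.sum_univ_six, Pi.add_apply,
      Pi.sub_apply, Pi.smul_apply, smul_eq_mul, Pi.single_apply, Matrix.cons_val, Fin.reduceEq,
      Fin.isValue, Fin.zero_eta, Fin.mk_one, Fin.reduceFinMk, if_true, if_false] <;>
    ring

theorem contractionKer_rho0 {w : Fin 6 → ℝ} (hw : w ≠ 0) :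
    contractionKer rho0 w = span ℝ {w, Jmodel w} := by
  refine le_antisymm (fun x hx => ?_) (span_le.2 ?_)
  · have hcross : rho0Cross w x = 0 := funext fun k => mem_contractionKer.1 hx _
    have hbac := rho0Cross_rho0Cross w x
    rw [hcross, show rho0Cross w 0 = 0 from funext fun _ => rho0.map_coord_zero 1 rfl] at hbac
    have hww : w ⬝ᵥ w ≠ 0 := fun h => hw (dotProduct_self_eq_zero.1 h)
    refine mem_span_pair.2 ⟨(w ⬝ᵥ w)⁻¹ * (x ⬝ᵥ w), (w ⬝ᵥ w)⁻¹ * (x ⬝ᵥ Jmodel w), ?_⟩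
    rw [mul_smul, mul_smul, ← smul_add, sub_eq_zero.1 hbac.symm, inv_smul_smul₀ hww]
  · rintro _ (rfl | rfl)
    · exact mem_contractionKer.2 fun y => rho0.map_eq_zero_of_eq _ (i := 0) (j := 1) rfl (by decide)
    · exact mem_contractionKer.2 (rho0_apply_Jmodel_self w)

theorem sh2_rho0_Jmodel (w a b c d : Fin 6 → ℝ) :
    sh2 (fun x y => rho0 ![w, x, y]) (fun x y => rho0 ![Jmodel w, x, y]) a b c d = 0 := by
  simp only [sh2, rho0_apply, Jmodel_apply, Matrix.cons_val]
  ring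

theorem sh2_rho0_Jmodel_Jmodel (w a b c d : Fin 6 → ℝ) :
    sh2 (fun x y => rho0 ![Jmodel w, x, y]) (fun x y => rho0 ![Jmodel w, x, y]) a b c d =
      sh2 (fun x y => rho0 ![w, x, y]) (fun x y => rho0 ![w, x, y]) a b c d := by
  simp only [sh2, rho0_apply, Jmodel_apply, Matrix.cons_val]
  ring

theorem sl3c_contraction_kernel_and_wedge
    {V : Type*} [AddCommGroup V] [Module ℝ V]
    (ρ : V [⋀^Fin 3]→ₗ[ℝ] ℝ) (J : V →ₗ[ℝ] V) (hJ : IsInducedJ ρ J)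
    (v : V) (hv : v ≠ 0) :
    {x : V | ∀ y : V, ρ ![v, x, y] = 0} = (Submodule.span ℝ {v, J v} : Set V) ∧
    {x : V | ∀ y : V, ρ ![J v, x, y] = 0} = (Submodule.span ℝ {v, J v} : Set V) ∧
    (∀ a b c d : V,
      sh2 (fun x y => ρ ![v, x, y]) (fun x y => ρ ![J v, x, y]) a b c d = 0) ∧
    (∀ a b c d : V,
      sh2 (fun x y => ρ ![J v, x, y]) (fun x y => ρ ![J v, x, y]) a b c d =
        sh2 (fun x y => ρ ![v, x, y]) (fun x y => ρ ![v, x, y]) a b c d) := by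
  obtain ⟨u, rfl, hJu⟩ := hJ
  have huJ (x : V) : u (J x) = Jmodel (u x) := by simp [hJu]
  have hJJ (x : V) : J (J x) = -x := by simp [hJu, Jmodel_Jmodel]
  have hker (z : V) (hz : z ≠ 0) :
      {x | ∀ y, rho0.compLinearMap (u : V →ₗ[ℝ] _) ![z, x, y] = 0} = (span ℝ {z, J z} : Set V) := by
    rw [← coe_contractionKer, contractionKer_compLinearMap,
      contractionKer_rho0 (u.map_ne_zero_iff.2 hz), comap_equiv_span_pair, ← huJ,
      u.symm_apply_apply, u.symm_apply_apply]
  have hJv : J v ≠ 0 := fun h => hv (neg_eq_zero.1 (by rw [← hJJ, h, map_zero]))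
  refine ⟨hker v hv, ?_, fun a b c d => ?_, fun a b c d => ?_⟩
  · rw [hker (J v) hJv, hJJ, span_pair_neg_swap]
  · simpa only [sh2, AlternatingMap.compLinearMap_apply_vec3, LinearEquiv.coe_coe, huJ]
      using sh2_rho0_Jmodel (u v) (u a) (u b) (u c) (u d)
  · simpa only [sh2, AlternatingMap.compLinearMap_apply_vec3, LinearEquiv.coe_coe, huJ]
      using sh2_rho0_Jmodel_Jmodel (u v) (u a) (u b) (u c) (u d)
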